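/- arXiv:1903.11476 — 3 statements merged into one kernel-verified Lean document; each statement's English description precedes it below -/
import Mathlib

section
/- Let E be a real vector space, let C ⊆ E be a nonempty convex set, let N ≥ 1, and let D = {x : Fin N → E | ∀ i, x i ∈ C}. Suppose J : (Fin N → E) → ℝ is convex on D and exchangeable (J(x ∘ σ) = J(x) for every permutation σ of Fin N and every x ∈ D). Then the infimum of J over D equals the infimum of J over constant tuples: inf_{x ∈ D} J(x) = inf_{c ∈ C} J(c, …, c). In particular, if J attains its infimum on D at some x* ∈ D, then it also attains its infimum at the constant tuple all of whose coordinates equal (1/N) ∑_i x* i; i.e., an identically symmetric optimal policy exists. -/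
/-!
Averaging a profile `x` over the `N` cyclic shifts `x ∘ (k + ·)` gives the constant profile at
the mean `N⁻¹ • ∑ i, x i`. The shifts lie in the permutation-invariant convex set `D`, and `J`
takes the value `J x` on each of them, so Jensen's inequality makes the constant profile at the
mean a point of `D` with `J` at most `J x`. Hence constant profiles do as well as arbitrary ones,
which gives both the equality of infima and the optimality of the averaged optimal profile.
-/

open Finset

section Averaging

variable {E : Type*} [AddCommGroup E] [Module ℝ E] {N : ℕ} [NeZero N]

theorem sum_smul_comp_addLeft_eq_const_mean (x : Fin N → E) :
    ∑ k : Fin N, (N : ℝ)⁻¹ • (x ∘ Equiv.addLeft k) = fun _ => (N : ℝ)⁻¹ • ∑ i, x i := by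
  funext j
  simp only [Finset.sum_apply, Pi.smul_apply, Function.comp_apply, Equiv.coe_addLeft,
    ← Finset.smul_sum]
  congr 1
  exact Fintype.sum_equiv (Equiv.addRight j) _ _ fun _ => rfl

theorem sum_inv_natCast_eq_one : ∑ _k : Fin N, (N : ℝ)⁻¹ = 1 := by
  simp [NeZero.ne N]

variable {D : Set (Fin N → E)} (hperm : ∀ σ : Equiv.Perm (Fin N), ∀ x ∈ D, x ∘ σ ∈ D)
include hperm

theorem Convex.const_mean_mem (hD : Convex ℝ D) {x : Fin N → E} (hx : x ∈ D) :
    (fun _ => (N : ℝ)⁻¹ • ∑ i, x i) ∈ D := by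
  rw [← sum_smul_comp_addLeft_eq_const_mean]
  exact hD.sum_mem (fun _ _ => by positivity) sum_inv_natCast_eq_one
    fun k _ => hperm _ x hx

theorem ConvexOn.map_const_mean_le {J : (Fin N → E) → ℝ} (hJ : ConvexOn ℝ D J)
    (hexch : ∀ σ : Equiv.Perm (Fin N), ∀ x ∈ D, J (x ∘ σ) = J x) {x : Fin N → E} (hx : x ∈ D) :
    J (fun _ => (N : ℝ)⁻¹ • ∑ i, x i) ≤ J x := by
  rw [← sum_smul_comp_addLeft_eq_const_mean]
  calc J (∑ k : Fin N, (N : ℝ)⁻¹ • (x ∘ Equiv.addLeft k))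
      ≤ ∑ k : Fin N, (N : ℝ)⁻¹ * J (x ∘ Equiv.addLeft k) :=
        hJ.map_sum_le (fun _ _ => by positivity) sum_inv_natCast_eq_one
          fun k _ => hperm _ x hx
    _ = ∑ _k : Fin N, (N : ℝ)⁻¹ * J x := by simp only [hexch _ x hx]
    _ = J x := by rw [← Finset.sum_mul, sum_inv_natCast_eq_one, one_mul]

end Averaging

theorem convex_setOf_forall_mem {ι E : Type*} [AddCommMonoid E] [Module ℝ E] {C : Set E}
    (hC : Convex ℝ C) : Convex ℝ {x : ι → E | ∀ i, x i ∈ C} :=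
  fun _ hx _ hy _ _ ha hb hab i => hC (hx i) (hy i) ha hb hab

theorem convexOn_of_forall_mem_Icc {E : Type*} [AddCommMonoid E] [Module ℝ E] {D : Set E}
    {J : E → ℝ} (hD : Convex ℝ D)
    (hconv : ∀ x ∈ D, ∀ y ∈ D, ∀ α : ℝ, α ∈ Set.Icc (0:ℝ) 1 →
      J (α • x + (1 - α) • y) ≤ α * J x + (1 - α) * J y) :
    ConvexOn ℝ D J := by
  refine ⟨hD, fun x hx y hy a b ha hb hab => ?_⟩
  obtain rfl : b = 1 - a := by linarith
  exact hconv x hx y hy a ⟨ha, by linarith⟩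

theorem symmetrically_optimal_of_convex_exchangeable_general
    {E : Type*} [AddCommGroup E] [Module ℝ E]
    (C : Set E) (hC : Convex ℝ C)
    (N : ℕ) (hN : 1 ≤ N)
    (D : Set (Fin N → E)) (hD : D = {x : Fin N → E | ∀ i, x i ∈ C})
    (J : (Fin N → E) → ℝ)
    (hconv : ∀ x ∈ D, ∀ y ∈ D, ∀ α : ℝ, α ∈ Set.Icc (0:ℝ) 1 →
      J (α • x + (1 - α) • y) ≤ α * J x + (1 - α) * J y)
    (hexch : ∀ (σ : Equiv.Perm (Fin N)), ∀ x ∈ D, J (x ∘ σ) = J x) :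
    sInf (J '' D) = sInf ((fun c : E => J (fun _ : Fin N => c)) '' C) ∧
    ∀ xstar ∈ D, (∀ y ∈ D, J xstar ≤ J y) →
      ((fun _ : Fin N => (N : ℝ)⁻¹ • ∑ i, xstar i) ∈ D ∧
        ∀ y ∈ D, J (fun _ : Fin N => (N : ℝ)⁻¹ • ∑ i, xstar i) ≤ J y) := by
  have : NeZero N := ⟨by omega⟩
  subst hD
  have hDconv := convex_setOf_forall_mem (ι := Fin N) hC
  have hJ := convexOn_of_forall_mem_Icc hDconv hconv
  have hperm (σ : Equiv.Perm (Fin N)) (x : Fin N → E) (hx : ∀ i, x i ∈ C) (i : Fin N) :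
      (x ∘ σ) i ∈ C :=
    hx (σ i)
  refine ⟨csInf_eq_csInf_of_forall_exists_le ?_ ?_, fun xstar hxstar hopt =>
    ⟨hDconv.const_mean_mem hperm hxstar,
      fun y hy => (hJ.map_const_mean_le hperm hexch hxstar).trans (hopt y hy)⟩⟩
  · rintro _ ⟨x, hx, rfl⟩
    exact ⟨_, ⟨_, hDconv.const_mean_mem hperm hx 0, rfl⟩, hJ.map_const_mean_le hperm hexch hx⟩
  · rintro _ ⟨c, hc, rfl⟩
    exact ⟨_, ⟨_, fun _ => hc, rfl⟩, le_rfl⟩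

/-- Theorem 3.1(ii), symmetrically optimal teams: for a convex exchangeable team cost
functional, the infimum over all profiles equals the infimum over identically symmetric
(constant) profiles, and if an optimal profile exists then the constant profile with value
the average of the optimal profile is also optimal. -/
theorem symmetrically_optimal_of_convex_exchangeable
    {E : Type*} [AddCommGroup E] [Module ℝ E]
    (C : Set E) (hCne : C.Nonempty) (hC : Convex ℝ C)
    (N : ℕ) (hN : 1 ≤ N)
    (D : Set (Fin N → E)) (hD : D = {x : Fin N → E | ∀ i, x i ∈ C})
    (J : (Fin N → E) → ℝ)
    (hconv : ∀ x ∈ D, ∀ y ∈ D, ∀ α : ℝ, α ∈ Set.Icc (0:ℝ) 1 →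
      J (α • x + (1 - α) • y) ≤ α * J x + (1 - α) * J y)
    (hexch : ∀ (σ : Equiv.Perm (Fin N)), ∀ x ∈ D, J (x ∘ σ) = J x) :
    sInf (J '' D) = sInf ((fun c : E => J (fun _ : Fin N => c)) '' C) ∧
    ∀ xstar ∈ D, (∀ y ∈ D, J xstar ≤ J y) →
      ((fun _ : Fin N => (N : ℝ)⁻¹ • ∑ i, xstar i) ∈ D ∧
        ∀ y ∈ D, J (fun _ : Fin N => (N : ℝ)⁻¹ • ∑ i, xstar i) ≤ J y) :=
  symmetrically_optimal_of_convex_exchangeable_general C hC N hN D hD J hconv hexch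
end

section
/- Let Ω, Y, U be measurable (standard Borel) spaces and N ≥ 1. Let μ be an exchangeable probability measure on Ω^N (invariant under every coordinate-permutation map), let κ be a Markov (probability) kernel from Ω to Y, and let c : Ω^N × U^N → [0,∞] be measurable with c(ω ∘ σ, u ∘ σ) = c(ω, u) for all permutations σ. For a profile of measurable policies γ : Fin N → (Y → U), define J(γ) = ∫_{Ω^N} ∫_{Y^N} c(ω, (γ i (y i))_i) d(⊗_{i} κ(ω_i))(y) dμ(ω), where ⊗_i κ(ω_i) is the product of the measures κ(ω_1), …, κ(ω_N). Then J(γ ∘ σ) = J(γ) for every permutation σ of Fin N. -/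
/-!
Exchangeability lets us replace `ω` by `ω ∘ σ` in the outer integral. The product measure
`⊗ᵢ κ (ω (σ i))` is the image of `⊗ᵢ κ (ω i)` under `y ↦ y ∘ σ`, which turns the policy profile
`γ ∘ σ` into a simultaneous relabelling of states and actions, and the invariance of `c` removes it.
Since precomposition with `σ` is a measurable equivalence, both changes of variables hold for
arbitrary integrands.
-/

open MeasureTheory
open scoped ENNReal

section

variable {ι α : Type*} [MeasurableSpace α]

lemma MeasurableEquiv.coe_piCongrLeft_perm_symm (σ : Equiv.Perm ι) :
    ⇑(MeasurableEquiv.piCongrLeft (fun _ : ι => α) σ.symm) = fun x => x ∘ σ := by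
  funext x i
  simpa using MeasurableEquiv.piCongrLeft_apply_apply (β := fun _ : ι => α) σ.symm x (σ i)

lemma lintegral_comp_perm_of_map_eq {μ : Measure (ι → α)} {σ : Equiv.Perm ι}
    (hμ : μ.map (fun x => x ∘ σ) = μ) (f : (ι → α) → ℝ≥0∞) :
    ∫⁻ x, f (x ∘ σ) ∂μ = ∫⁻ x, f x ∂μ := by
  conv_rhs => rw [← hμ, ← MeasurableEquiv.coe_piCongrLeft_perm_symm, lintegral_map_equiv]
  rw [MeasurableEquiv.coe_piCongrLeft_perm_symm]

variable [Fintype ι]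

lemma lintegral_pi_comp_perm (ν : ι → Measure α) [∀ i, SigmaFinite (ν i)]
    (σ : Equiv.Perm ι) (f : (ι → α) → ℝ≥0∞) :
    ∫⁻ x, f x ∂Measure.pi (fun i => ν (σ i)) = ∫⁻ x, f (x ∘ σ) ∂Measure.pi ν := by
  have h := (measurePreserving_piCongrLeft (fun i => ν (σ i)) σ.symm).lintegral_map_equiv f
  simpa [MeasurableEquiv.coe_piCongrLeft_perm_symm] using h

lemma lintegral_pi_comp_perm_of_invariant {Ω U : Type*} (ν : Ω → Measure α)
    [∀ ω, SigmaFinite (ν ω)] (c : (ι → Ω) → (ι → U) → ℝ≥0∞) {σ : Equiv.Perm ι}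
    (hc : ∀ ω u, c (ω ∘ σ) (u ∘ σ) = c ω u) (γ : ι → α → U) (ω : ι → Ω) :
    ∫⁻ y, c (ω ∘ σ) (fun i => γ (σ i) (y i)) ∂Measure.pi (fun i => ν (ω (σ i)))
      = ∫⁻ y, c ω (fun i => γ i (y i)) ∂Measure.pi (fun i => ν (ω i)) := by
  rw [lintegral_pi_comp_perm (fun i => ν (ω i)) σ]
  exact lintegral_congr fun y => hc ω fun i => γ i (y i)

end

theorem team_exchangeable_kernel_general
    {Ω Y U : Type*} [MeasurableSpace Ω] [MeasurableSpace Y]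
    (N : ℕ)
    (μ : Measure (Fin N → Ω))
    (hexch : ∀ σ : Equiv.Perm (Fin N),
      Measure.map (fun ω : Fin N → Ω => ω ∘ σ) μ = μ)
    (κ : ProbabilityTheory.Kernel Ω Y) [ProbabilityTheory.IsMarkovKernel κ]
    (c : (Fin N → Ω) → (Fin N → U) → ℝ≥0∞)
    (hcinv : ∀ (σ : Equiv.Perm (Fin N)) (ω : Fin N → Ω) (u : Fin N → U),
      c (ω ∘ σ) (u ∘ σ) = c ω u)
    (γ : Fin N → Y → U) :
    ∀ σ : Equiv.Perm (Fin N),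
      ∫⁻ ω, ∫⁻ y, c ω (fun i => γ (σ i) (y i)) ∂(Measure.pi fun i => κ (ω i)) ∂μ
        = ∫⁻ ω, ∫⁻ y, c ω (fun i => γ i (y i)) ∂(Measure.pi fun i => κ (ω i)) ∂μ := by
  intro σ
  calc ∫⁻ ω, ∫⁻ y, c ω (fun i => γ (σ i) (y i)) ∂(Measure.pi fun i => κ (ω i)) ∂μ
      = ∫⁻ ω, ∫⁻ y, c (ω ∘ σ) (fun i => γ (σ i) (y i)) ∂(Measure.pi fun i => κ (ω (σ i))) ∂μ :=
        (lintegral_comp_perm_of_map_eq (hexch σ) fun ω =>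
          ∫⁻ y, c ω (fun i => γ (σ i) (y i)) ∂(Measure.pi fun i => κ (ω i))).symm
    _ = ∫⁻ ω, ∫⁻ y, c ω (fun i => γ i (y i)) ∂(Measure.pi fun i => κ (ω i)) ∂μ :=
        lintegral_congr fun ω => lintegral_pi_comp_perm_of_invariant κ c (hcinv σ) γ ω

/-- Theorem 3.1(i), kernel form: under the conditional independence condition where each
decision maker's observation is generated from its own coordinate of an exchangeable
primitive random vector through the same observation channel `κ`, the expected cost is
invariant under permutations of the policy profile. -/
theorem team_exchangeable_kernel
    {Ω Y U : Type*} [MeasurableSpace Ω] [MeasurableSpace Y] [MeasurableSpace U]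
    (N : ℕ) (hN : 1 ≤ N)
    (μ : Measure (Fin N → Ω)) [IsProbabilityMeasure μ]
    (hexch : ∀ σ : Equiv.Perm (Fin N),
      Measure.map (fun ω : Fin N → Ω => ω ∘ σ) μ = μ)
    (κ : ProbabilityTheory.Kernel Ω Y) [ProbabilityTheory.IsMarkovKernel κ]
    (c : (Fin N → Ω) → (Fin N → U) → ℝ≥0∞)
    (hc : Measurable (fun p : (Fin N → Ω) × (Fin N → U) => c p.1 p.2))
    (hcinv : ∀ (σ : Equiv.Perm (Fin N)) (ω : Fin N → Ω) (u : Fin N → U),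
      c (ω ∘ σ) (u ∘ σ) = c ω u)
    (γ : Fin N → Y → U) (hγ : ∀ i, Measurable (γ i)) :
    ∀ σ : Equiv.Perm (Fin N),
      ∫⁻ ω, ∫⁻ y, c ω (fun i => γ (σ i) (y i)) ∂(Measure.pi fun i => κ (ω i)) ∂μ
        = ∫⁻ ω, ∫⁻ y, c ω (fun i => γ i (y i)) ∂(Measure.pi fun i => κ (ω i)) ∂μ :=
  team_exchangeable_kernel_general N μ hexch κ c hcinv γ
end

section
/- In the mean-field N-DM team setup (decoupled dynamics x_{t+1}^i = f_t(x_t^i, u_t^i, w_t^i), observations y_t^i = h_t(x_{0:t}^i, u_{0:t−1}^i, v_{0:t}^i) identical across i, actions u_t^i = γ_t^i(y_t^i), cost J^N(γ) = (1/N) ∑_{t<T} ∑_{i≤N} E[c(x_t^i, u_t^i, (1/N)∑_p u_t^p, (1/N)∑_p x_t^p)]), assume: the action space U ⊆ ℝ^m is compact and convex; c is continuous and nonnegative; f_t and h_t are continuous in the state and action arguments; (x_0^1,…,x_0^N) are exchangeable zero-mean random vectors with identical distribution; for each t the noises {w_t^i}_i and {v_t^i}_i are i.i.d. zero-mean, mutually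 independent across time, independent of each other and of the initial states; and J^N is convex on the (convex) set of measurable policy profiles with finite cost. Then the team is symmetrically optimal: for every measurable policy profile γ with finite cost there exists a single measurable policy γ̃ = (γ̃_t)_t such that the profile in which every DM uses γ̃ satisfies J^N(γ̃, …, γ̃) ≤ J^N(γ). -/
open MeasureTheory
open scoped ENNReal

namespace MeanFieldTeam5

variable {Y : Type*} {W V : Type}

/-- Joint state/action history of a single decision maker up to time `t`:
`x_{t+1} = f t (x_t, u_t, w_t)`, `y_t = h t (x_{0:t}, u_{0:t-1}, v_{0:t})`,
`u_t = g t y_t`. -/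
def hist {n m : ℕ}
    (f : ℕ → (Fin n → ℝ) → (Fin m → ℝ) → W → (Fin n → ℝ))
    (h : (t : ℕ) → (Fin (t + 1) → (Fin n → ℝ)) → (Fin t → (Fin m → ℝ)) →
      (Fin (t + 1) → V) → Y)
    (g : ℕ → Y → (Fin m → ℝ))
    (x0 : Fin n → ℝ) (wseq : ℕ → W) (vseq : ℕ → V) :
    (t : ℕ) → (Fin (t + 1) → (Fin n → ℝ)) × (Fin t → (Fin m → ℝ))
  | 0 => (fun _ => x0, Fin.elim0)
  | t + 1 =>
      let p := hist f h g x0 wseq vseq t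
      let yt := h t p.1 p.2 (fun s => vseq s)
      let ut := g t yt
      (Fin.snoc p.1 (f t (p.1 (Fin.last t)) ut (wseq t)), Fin.snoc p.2 ut)

/-- State of a single decision maker at time `t`. -/
def xAt {n m : ℕ} (f : ℕ → (Fin n → ℝ) → (Fin m → ℝ) → W → (Fin n → ℝ))
    (h : (t : ℕ) → (Fin (t + 1) → (Fin n → ℝ)) → (Fin t → (Fin m → ℝ)) →
      (Fin (t + 1) → V) → Y)
    (g : ℕ → Y → (Fin m → ℝ))
    (x0 : Fin n → ℝ) (wseq : ℕ → W) (vseq : ℕ → V) (t : ℕ) : Fin n → ℝ :=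
  (hist f h g x0 wseq vseq t).1 (Fin.last t)

/-- Observation of a single decision maker at time `t`. -/
def yAt {n m : ℕ} (f : ℕ → (Fin n → ℝ) → (Fin m → ℝ) → W → (Fin n → ℝ))
    (h : (t : ℕ) → (Fin (t + 1) → (Fin n → ℝ)) → (Fin t → (Fin m → ℝ)) →
      (Fin (t + 1) → V) → Y)
    (g : ℕ → Y → (Fin m → ℝ))
    (x0 : Fin n → ℝ) (wseq : ℕ → W) (vseq : ℕ → V) (t : ℕ) : Y :=
  h t (hist f h g x0 wseq vseq t).1 (hist f h g x0 wseq vseq t).2 (fun s => vseq s)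

/-- Action of a single decision maker at time `t`. -/
def uAt {n m : ℕ} (f : ℕ → (Fin n → ℝ) → (Fin m → ℝ) → W → (Fin n → ℝ))
    (h : (t : ℕ) → (Fin (t + 1) → (Fin n → ℝ)) → (Fin t → (Fin m → ℝ)) →
      (Fin (t + 1) → V) → Y)
    (g : ℕ → Y → (Fin m → ℝ))
    (x0 : Fin n → ℝ) (wseq : ℕ → W) (vseq : ℕ → V) (t : ℕ) : Fin m → ℝ :=
  g t (yAt f h g x0 wseq vseq t)

/-- The expected cost `J^N` of the `N`-decision-maker mean-field team over horizon `T`,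
with nonnegative real-valued stage cost `c`. -/
noncomputable def mfCost {Ω : Type*} [MeasurableSpace Ω] (P : Measure Ω)
    {n m : ℕ} (N T : ℕ)
    (c : (Fin n → ℝ) → (Fin m → ℝ) → (Fin m → ℝ) → (Fin n → ℝ) → ℝ)
    (f : ℕ → (Fin n → ℝ) → (Fin m → ℝ) → W → (Fin n → ℝ))
    (h : (t : ℕ) → (Fin (t + 1) → (Fin n → ℝ)) → (Fin t → (Fin m → ℝ)) →
      (Fin (t + 1) → V) → Y)
    (γ : Fin N → ℕ → Y → (Fin m → ℝ))
    (x0 : Fin N → Ω → (Fin n → ℝ))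
    (w : Fin N → ℕ → Ω → W) (v : Fin N → ℕ → Ω → V) : ℝ≥0∞ :=
  (N : ℝ≥0∞)⁻¹ * ∑ t ∈ Finset.range T, ∑ i : Fin N, ∫⁻ ω,
    ENNReal.ofReal
      (c (xAt f h (γ i) (x0 i ω) (fun s => w i s ω) (fun s => v i s ω) t)
        (uAt f h (γ i) (x0 i ω) (fun s => w i s ω) (fun s => v i s ω) t)
        ((N : ℝ)⁻¹ • ∑ p : Fin N,
          uAt f h (γ p) (x0 p ω) (fun s => w p s ω) (fun s => v p s ω) t)
        ((N : ℝ)⁻¹ • ∑ p : Fin N,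
          xAt f h (γ p) (x0 p ω) (fun s => w p s ω) (fun s => v p s ω) t)) ∂P

/-- Index type for the joint independence hypothesis. -/
abbrev IdxType (N T : ℕ) : Type := Option ((Fin N × Fin T) ⊕ (Fin N × Fin T))

/-- The space in which the random element indexed by `idx` takes its values. -/
def idxSpace (n N T : ℕ) (W V : Type) : IdxType N T → Type
  | none => Fin N → Fin n → ℝ
  | some (Sum.inl _) => W
  | some (Sum.inr _) => V

instance idxSpaceMeasurable (n N T : ℕ) (W V : Type) [MeasurableSpace W]
    [MeasurableSpace V] (idx : IdxType N T) : MeasurableSpace (idxSpace n N T W V idx) :=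
  match idx with
  | none => inferInstanceAs (MeasurableSpace (Fin N → Fin n → ℝ))
  | some (Sum.inl _) => ‹MeasurableSpace W›
  | some (Sum.inr _) => ‹MeasurableSpace V›

/-- The family of primitive random elements: initial states and noises. -/
def idxFun {Ω : Type*} (n N T : ℕ)
    (x0 : Fin N → Ω → (Fin n → ℝ))
    (w : Fin N → ℕ → Ω → W) (v : Fin N → ℕ → Ω → V) :
    (idx : IdxType N T) → Ω → idxSpace n N T W V idx
  | none => fun ω i => x0 i ω
  | some (Sum.inl (i, t)) => w i t
  | some (Sum.inr (i, t)) => v i t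

/-!
Relabelling the decision makers does not change the cost. Up to the horizon, every stage cost
is a fixed function of the family of primitive random elements (initial states and noises), so
the cost only depends on the joint law of that family. Permuting the decision makers turns this
family into one that is again independent, and has the same marginals by exchangeability of the
initial states and identical distribution of the noises; hence it has the same joint law.

So every cyclic shift `γ (· + k)` of a profile `γ` costs `J γ`. On the convex set of admissible
profiles of finite cost, `toReal ∘ J` is a convex function, and Jensen's inequality bounds the
cost of the average `N⁻¹ • ∑ k, γ (· + k)` by `J γ`. That average is the symmetric profile in
which every decision maker uses `N⁻¹ • ∑ j, γ j`.
-/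

section ConvexAverage

variable {E : Type*} [AddCommGroup E] [Module ℝ E]

def ConvexWhereFinite (S : Set E) (J : E → ℝ≥0∞) : Prop :=
  ∀ x ∈ S, ∀ y ∈ S, J x ≠ ⊤ → J y ≠ ⊤ → ∀ α ∈ Set.Ioo (0 : ℝ) 1,
    J (α • x + (1 - α) • y) ≤ ENNReal.ofReal α * J x + ENNReal.ofReal (1 - α) * J y

variable {S : Set E} {J : E → ℝ≥0∞}

theorem ConvexWhereFinite.apply_add_le (hJ : ConvexWhereFinite S J) {x y : E}
    (hx : x ∈ S) (hy : y ∈ S) (hxJ : J x ≠ ⊤) (hyJ : J y ≠ ⊤) {a b : ℝ}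
    (ha : 0 ≤ a) (hb : 0 ≤ b) (hab : a + b = 1) :
    J (a • x + b • y) ≤ ENNReal.ofReal a * J x + ENNReal.ofReal b * J y := by
  rcases ha.eq_or_lt with rfl | ha'
  · obtain rfl : b = 1 := by linarith
    simp
  rcases hb.eq_or_lt with rfl | hb'
  · obtain rfl : a = 1 := by linarith
    simp
  obtain rfl : b = 1 - a := by linarith
  exact hJ x hx y hy hxJ hyJ a ⟨ha', by linarith⟩

theorem ConvexWhereFinite.convex_inter (hS : Convex ℝ S) (hJ : ConvexWhereFinite S J) :
    Convex ℝ (S ∩ {x | J x ≠ ⊤}) := by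
  rintro x ⟨hx, hxJ⟩ y ⟨hy, hyJ⟩ a b ha hb hab
  refine ⟨hS hx hy ha hb hab, ne_top_of_le_ne_top ?_ (hJ.apply_add_le hx hy hxJ hyJ ha hb hab)⟩
  exact ENNReal.add_ne_top.2
    ⟨ENNReal.mul_ne_top ENNReal.ofReal_ne_top hxJ, ENNReal.mul_ne_top ENNReal.ofReal_ne_top hyJ⟩

theorem ConvexWhereFinite.convexOn_toReal (hS : Convex ℝ S) (hJ : ConvexWhereFinite S J) :
    ConvexOn ℝ (S ∩ {x | J x ≠ ⊤}) fun x => (J x).toReal := by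
  refine ⟨hJ.convex_inter hS, ?_⟩
  rintro x ⟨hx, hxJ⟩ y ⟨hy, hyJ⟩ a b ha hb hab
  have hle := hJ.apply_add_le hx hy hxJ hyJ ha hb hab
  calc (J (a • x + b • y)).toReal
      ≤ (ENNReal.ofReal a * J x + ENNReal.ofReal b * J y).toReal :=
        ENNReal.toReal_mono (by finiteness) hle
    _ = a • (J x).toReal + b • (J y).toReal := by
        rw [ENNReal.toReal_add (by finiteness) (by finiteness), ENNReal.toReal_mul,
          ENNReal.toReal_mul, ENNReal.toReal_ofReal ha, ENNReal.toReal_ofReal hb, smul_eq_mul,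
          smul_eq_mul]

theorem ConvexWhereFinite.apply_sum_le (hS : Convex ℝ S) (hJ : ConvexWhereFinite S J)
    {ι : Type*} {s : Finset ι} {a : ι → ℝ} (ha₀ : ∀ i ∈ s, 0 ≤ a i) (ha₁ : ∑ i ∈ s, a i = 1)
    {p : ι → E} (hp : ∀ i ∈ s, p i ∈ S) {C : ℝ≥0∞} (hC : C ≠ ⊤) (hpC : ∀ i ∈ s, J (p i) ≤ C) :
    J (∑ i ∈ s, a i • p i) ≤ C := by
  have hp' : ∀ i ∈ s, p i ∈ S ∩ {x | J x ≠ ⊤} :=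
    fun i hi => ⟨hp i hi, ne_top_of_le_ne_top hC (hpC i hi)⟩
  have hsum := (hJ.convex_inter hS).sum_mem ha₀ ha₁ hp'
  rw [← ENNReal.toReal_le_toReal hsum.2 hC]
  calc (J (∑ i ∈ s, a i • p i)).toReal
      ≤ ∑ i ∈ s, a i • (J (p i)).toReal := (hJ.convexOn_toReal hS).map_sum_le ha₀ ha₁ hp'
    _ ≤ ∑ i ∈ s, a i • C.toReal := Finset.sum_le_sum fun i hi =>
        smul_le_smul_of_nonneg_left (ENNReal.toReal_mono hC (hpC i hi)) (ha₀ i hi)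
    _ = C.toReal := by rw [← Finset.sum_smul, ha₁, one_smul]

end ConvexAverage

theorem convex_setOf_measurable_mem {ι τ Z E : Type*} [MeasurableSpace Z] [AddCommGroup E]
    [Module ℝ E] [MeasurableSpace E] [MeasurableAdd₂ E] [MeasurableConstSMul ℝ E] {U : Set E}
    (hU : Convex ℝ U) :
    Convex ℝ {γ : ι → τ → Z → E | (∀ i t, Measurable (γ i t)) ∧ ∀ i t y, γ i t y ∈ U} := by
  rintro γ₁ ⟨hm₁, hU₁⟩ γ₂ ⟨hm₂, hU₂⟩ a b ha hb hab
  exact ⟨fun i t => ((hm₁ i t).const_smul a).add ((hm₂ i t).const_smul b),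
    fun i t y => hU (hU₁ i t y) (hU₂ i t y) ha hb hab⟩

theorem sum_translates_eq_const {G M : Type*} [AddGroup G] [Fintype G] [AddCommMonoid M]
    (γ : G → M) :
    ∑ k, (fun i => γ (i + k)) = fun _ => ∑ j, γ j := by
  funext i
  rw [Finset.sum_apply]
  exact Equiv.sum_comp (Equiv.addLeft i) γ

section Trajectory

variable {n m : ℕ} {f : ℕ → (Fin n → ℝ) → (Fin m → ℝ) → W → (Fin n → ℝ)}
  {h : (t : ℕ) → (Fin (t + 1) → (Fin n → ℝ)) → (Fin t → (Fin m → ℝ)) → (Fin (t + 1) → V) → Y}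
  {g : ℕ → Y → (Fin m → ℝ)}

theorem hist_congr {x0 : Fin n → ℝ} {wseq wseq' : ℕ → W} {vseq vseq' : ℕ → V} (t : ℕ)
    (hw : ∀ s < t, wseq s = wseq' s) (hv : ∀ s < t, vseq s = vseq' s) :
    hist f h g x0 wseq vseq t = hist f h g x0 wseq' vseq' t := by
  induction t with
  | zero => rfl
  | succ t ih =>
    have hv' : (fun s : Fin (t + 1) => vseq s) = fun s : Fin (t + 1) => vseq' s :=
      funext fun s => hv s (by omega)
    simp only [hist, ih (fun s hs => hw s (by omega)) (fun s hs => hv s (by omega)), hv',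
      hw t (by omega)]

theorem xAt_congr {x0 : Fin n → ℝ} {wseq wseq' : ℕ → W} {vseq vseq' : ℕ → V} (t : ℕ)
    (hw : ∀ s < t, wseq s = wseq' s) (hv : ∀ s < t, vseq s = vseq' s) :
    xAt f h g x0 wseq vseq t = xAt f h g x0 wseq' vseq' t := by
  rw [xAt, hist_congr t hw hv, xAt]

theorem uAt_congr {x0 : Fin n → ℝ} {wseq wseq' : ℕ → W} {vseq vseq' : ℕ → V} (t : ℕ)
    (hw : ∀ s < t, wseq s = wseq' s) (hv : ∀ s ≤ t, vseq s = vseq' s) :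
    uAt f h g x0 wseq vseq t = uAt f h g x0 wseq' vseq' t := by
  have hv' : (fun s : Fin (t + 1) => vseq s) = fun s : Fin (t + 1) => vseq' s :=
    funext fun s => hv s (by omega)
  rw [uAt, yAt, hist_congr t hw (fun s hs => hv s hs.le), hv', uAt, yAt]

theorem _root_.Measurable.finSnoc {α β : Type*} [MeasurableSpace α] [MeasurableSpace β] {k : ℕ}
    {F : α → Fin k → β} {G : α → β} (hF : Measurable F) (hG : Measurable G) :
    Measurable fun a => (Fin.snoc (F a) (G a) : Fin (k + 1) → β) := by
  refine measurable_pi_lambda _ fun i => ?_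
  induction i using Fin.lastCases with
  | last => simpa only [Fin.snoc_last] using hG
  | cast j => simpa only [Fin.snoc_castSucc] using measurable_pi_iff.1 hF j

variable [MeasurableSpace Y] [MeasurableSpace W] [MeasurableSpace V]

theorem measurable_hist
    (hfm : ∀ t, Measurable fun q : (Fin n → ℝ) × (Fin m → ℝ) × W => f t q.1 q.2.1 q.2.2)
    (hhm : ∀ t, Measurable fun q : (Fin (t + 1) → (Fin n → ℝ)) × (Fin t → (Fin m → ℝ)) ×
      (Fin (t + 1) → V) => h t q.1 q.2.1 q.2.2)
    (hg : ∀ t, Measurable (g t)) (t : ℕ) :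
    Measurable fun q : (Fin n → ℝ) × (ℕ → W) × (ℕ → V) => hist f h g q.1 q.2.1 q.2.2 t := by
  induction t with
  | zero => exact (measurable_pi_lambda _ fun _ => measurable_fst).prodMk measurable_const
  | succ t ih =>
    have hobs : Measurable fun q : (Fin n → ℝ) × (ℕ → W) × (ℕ → V) =>
        h t (hist f h g q.1 q.2.1 q.2.2 t).1 (hist f h g q.1 q.2.1 q.2.2 t).2
          (fun s : Fin (t + 1) => q.2.2 s) :=
      (hhm t).comp (ih.fst.prodMk (ih.snd.prodMk (by fun_prop)))
    have hact := (hg t).comp hobs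
    have hstate : Measurable fun q : (Fin n → ℝ) × (ℕ → W) × (ℕ → V) =>
        f t ((hist f h g q.1 q.2.1 q.2.2 t).1 (Fin.last t)) (g t (h t
          (hist f h g q.1 q.2.1 q.2.2 t).1 (hist f h g q.1 q.2.1 q.2.2 t).2
            (fun s : Fin (t + 1) => q.2.2 s))) (q.2.1 t) :=
      (hfm t).comp (((measurable_pi_apply _).comp ih.fst).prodMk (hact.prodMk (by fun_prop)))
    exact (ih.fst.finSnoc hstate).prodMk (ih.snd.finSnoc hact)

theorem measurable_xAt
    (hfm : ∀ t, Measurable fun q : (Fin n → ℝ) × (Fin m → ℝ) × W => f t q.1 q.2.1 q.2.2)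
    (hhm : ∀ t, Measurable fun q : (Fin (t + 1) → (Fin n → ℝ)) × (Fin t → (Fin m → ℝ)) ×
      (Fin (t + 1) → V) => h t q.1 q.2.1 q.2.2)
    (hg : ∀ t, Measurable (g t)) (t : ℕ) :
    Measurable fun q : (Fin n → ℝ) × (ℕ → W) × (ℕ → V) => xAt f h g q.1 q.2.1 q.2.2 t :=
  (measurable_pi_apply _).comp (measurable_hist hfm hhm hg t).fst

theorem measurable_uAt
    (hfm : ∀ t, Measurable fun q : (Fin n → ℝ) × (Fin m → ℝ) × W => f t q.1 q.2.1 q.2.2)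
    (hhm : ∀ t, Measurable fun q : (Fin (t + 1) → (Fin n → ℝ)) × (Fin t → (Fin m → ℝ)) ×
      (Fin (t + 1) → V) => h t q.1 q.2.1 q.2.2)
    (hg : ∀ t, Measurable (g t)) (t : ℕ) :
    Measurable fun q : (Fin n → ℝ) × (ℕ → W) × (ℕ → V) => uAt f h g q.1 q.2.1 q.2.2 t :=
  (hg t).comp ((hhm t).comp ((measurable_hist hfm hhm hg t).fst.prodMk
    ((measurable_hist hfm hhm hg t).snd.prodMk (by fun_prop))))

end Trajectory

section StageCost

variable {n m N : ℕ} {c : (Fin n → ℝ) → (Fin m → ℝ) → (Fin m → ℝ) → (Fin n → ℝ) → ℝ}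
  {f : ℕ → (Fin n → ℝ) → (Fin m → ℝ) → W → (Fin n → ℝ)}
  {h : (t : ℕ) → (Fin (t + 1) → (Fin n → ℝ)) → (Fin t → (Fin m → ℝ)) → (Fin (t + 1) → V) → Y}
  {γ : Fin N → ℕ → Y → (Fin m → ℝ)}

/-- `q p` collects the initial state, state noise and observation noise of decision maker `p`. -/
noncomputable def stageCost (N : ℕ)
    (c : (Fin n → ℝ) → (Fin m → ℝ) → (Fin m → ℝ) → (Fin n → ℝ) → ℝ)
    (f : ℕ → (Fin n → ℝ) → (Fin m → ℝ) → W → (Fin n → ℝ))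
    (h : (t : ℕ) → (Fin (t + 1) → (Fin n → ℝ)) → (Fin t → (Fin m → ℝ)) →
      (Fin (t + 1) → V) → Y)
    (γ : Fin N → ℕ → Y → (Fin m → ℝ)) (t : ℕ) (i : Fin N)
    (q : Fin N → (Fin n → ℝ) × (ℕ → W) × (ℕ → V)) : ℝ≥0∞ :=
  ENNReal.ofReal
    (c (xAt f h (γ i) (q i).1 (q i).2.1 (q i).2.2 t)
      (uAt f h (γ i) (q i).1 (q i).2.1 (q i).2.2 t)
      ((N : ℝ)⁻¹ • ∑ p, uAt f h (γ p) (q p).1 (q p).2.1 (q p).2.2 t)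
      ((N : ℝ)⁻¹ • ∑ p, xAt f h (γ p) (q p).1 (q p).2.1 (q p).2.2 t))

theorem mfCost_eq_sum_stageCost {Ω : Type*} [MeasurableSpace Ω] (P : Measure Ω) (T : ℕ)
    (x0 : Fin N → Ω → (Fin n → ℝ)) (w : Fin N → ℕ → Ω → W) (v : Fin N → ℕ → Ω → V) :
    mfCost P N T c f h γ x0 w v = (N : ℝ≥0∞)⁻¹ * ∑ t ∈ Finset.range T, ∑ i, ∫⁻ ω,
      stageCost N c f h γ t i (fun p => (x0 p ω, fun s => w p s ω, fun s => v p s ω)) ∂P :=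
  rfl

theorem stageCost_congr {t : ℕ} {i : Fin N} {q q' : Fin N → (Fin n → ℝ) × (ℕ → W) × (ℕ → V)}
    (hx : ∀ p, (q p).1 = (q' p).1) (hw : ∀ p, ∀ s < t, (q p).2.1 s = (q' p).2.1 s)
    (hv : ∀ p, ∀ s ≤ t, (q p).2.2 s = (q' p).2.2 s) :
    stageCost N c f h γ t i q = stageCost N c f h γ t i q' := by
  have hX : ∀ p, xAt f h (γ p) (q p).1 (q p).2.1 (q p).2.2 t
      = xAt f h (γ p) (q' p).1 (q' p).2.1 (q' p).2.2 t := fun p => by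
    rw [hx p, xAt_congr t (hw p) fun s hs => hv p s hs.le]
  have hU : ∀ p, uAt f h (γ p) (q p).1 (q p).2.1 (q p).2.2 t
      = uAt f h (γ p) (q' p).1 (q' p).2.1 (q' p).2.2 t := fun p => by
    rw [hx p, uAt_congr t (hw p) (hv p)]
  simp only [stageCost, hX, hU]

theorem stageCost_comp_perm (σ : Equiv.Perm (Fin N)) (t : ℕ) (i : Fin N)
    (q : Fin N → (Fin n → ℝ) × (ℕ → W) × (ℕ → V)) :
    stageCost N c f h (fun p => γ (σ p)) t i q = stageCost N c f h γ t (σ i) (q ∘ σ.symm) := by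
  simp only [stageCost, Function.comp_apply, Equiv.symm_apply_apply]
  rw [← Equiv.sum_comp σ (fun p => uAt f h (γ p) (q (σ.symm p)).1 _ _ t),
    ← Equiv.sum_comp σ (fun p => xAt f h (γ p) (q (σ.symm p)).1 _ _ t)]
  simp only [Equiv.symm_apply_apply]

theorem measurable_stageCost [MeasurableSpace Y] [MeasurableSpace W] [MeasurableSpace V]
    (hcm : Measurable fun q : (Fin n → ℝ) × (Fin m → ℝ) × (Fin m → ℝ) × (Fin n → ℝ) =>
      c q.1 q.2.1 q.2.2.1 q.2.2.2)
    (hfm : ∀ t, Measurable fun q : (Fin n → ℝ) × (Fin m → ℝ) × W => f t q.1 q.2.1 q.2.2)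
    (hhm : ∀ t, Measurable fun q : (Fin (t + 1) → (Fin n → ℝ)) × (Fin t → (Fin m → ℝ)) ×
      (Fin (t + 1) → V) => h t q.1 q.2.1 q.2.2)
    (hγ : ∀ i t, Measurable (γ i t)) (t : ℕ) (i : Fin N) :
    Measurable (stageCost N c f h γ t i) := by
  have hX : ∀ p, Measurable fun q : Fin N → (Fin n → ℝ) × (ℕ → W) × (ℕ → V) =>
      xAt f h (γ p) (q p).1 (q p).2.1 (q p).2.2 t :=
    fun p => (measurable_xAt hfm hhm (hγ p) t).comp (measurable_pi_apply p)
  have hU : ∀ p, Measurable fun q : Fin N → (Fin n → ℝ) × (ℕ → W) × (ℕ → V) =>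
      uAt f h (γ p) (q p).1 (q p).2.1 (q p).2.2 t :=
    fun p => (measurable_uAt hfm hhm (hγ p) t).comp (measurable_pi_apply p)
  exact ENNReal.measurable_ofReal.comp (hcm.comp ((hX i).prodMk ((hU i).prodMk
    (((Finset.measurable_sum Finset.univ fun p _ => hU p).fun_const_smul _).prodMk
      ((Finset.measurable_sum Finset.univ fun p _ => hX p).fun_const_smul _)))))

end StageCost

section Primitives

variable {Ω : Type*} {n N T : ℕ}
  {x0 : Fin N → Ω → (Fin n → ℝ)} {w : Fin N → ℕ → Ω → W} {v : Fin N → ℕ → Ω → V}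

def primitives (n N T : ℕ) (x0 : Fin N → Ω → (Fin n → ℝ)) (w : Fin N → ℕ → Ω → W)
    (v : Fin N → ℕ → Ω → V) (ω : Ω) : ∀ idx : IdxType N T, idxSpace n N T W V idx :=
  fun idx => idxFun n N T x0 w v idx ω

def truncSeq {α : Type*} [Inhabited α] {T : ℕ} (a : Fin T → α) (s : ℕ) : α :=
  if hs : s < T then a ⟨s, hs⟩ else default

def dmData [Inhabited W] [Inhabited V] (z : ∀ idx : IdxType N T, idxSpace n N T W V idx)
    (p : Fin N) : (Fin n → ℝ) × (ℕ → W) × (ℕ → V) :=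
  (z none p, truncSeq fun s => z (some (.inl (p, s))), truncSeq fun s => z (some (.inr (p, s))))

theorem dmData_primitives [Inhabited W] [Inhabited V] (ω : Ω) (p : Fin N) :
    (dmData (primitives n N T x0 w v ω) p).1 = x0 p ω ∧
    (∀ s < T, (dmData (primitives n N T x0 w v ω) p).2.1 s = w p s ω) ∧
    (∀ s < T, (dmData (primitives n N T x0 w v ω) p).2.2 s = v p s ω) := by
  refine ⟨rfl, fun s hs => ?_, fun s hs => ?_⟩ <;>
    simp [dmData, truncSeq, hs, primitives, idxFun]

variable [MeasurableSpace Ω] [MeasurableSpace W] [MeasurableSpace V]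

theorem measurable_idxFun (hx0 : ∀ i, Measurable (x0 i)) (hw : ∀ i t, Measurable (w i t))
    (hv : ∀ i t, Measurable (v i t)) (idx : IdxType N T) :
    Measurable (idxFun n N T x0 w v idx) :=
  match idx with
  | none => measurable_pi_lambda _ hx0
  | some (Sum.inl (i, t)) => hw i t
  | some (Sum.inr (i, t)) => hv i t

theorem measurable_truncSeq {α : Type*} [Inhabited α] [MeasurableSpace α] {T : ℕ} :
    Measurable (truncSeq : (Fin T → α) → ℕ → α) := by
  refine measurable_pi_lambda _ fun s => ?_
  by_cases hs : s < T
  · simpa only [truncSeq, hs, dif_pos] using measurable_pi_apply _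
  · simp only [truncSeq, hs, dif_neg, not_false_eq_true, measurable_const]

theorem measurable_dmData [Inhabited W] [Inhabited V] :
    Measurable (dmData : (∀ idx : IdxType N T, idxSpace n N T W V idx) → Fin N → _) := by
  refine measurable_pi_lambda _ fun p => ?_
  exact ((measurable_pi_apply p).comp (measurable_pi_apply none)).prodMk
    ((measurable_truncSeq.comp (measurable_pi_lambda _ fun s =>
        measurable_pi_apply (some (Sum.inl (p, s))))).prodMk
      (measurable_truncSeq.comp (measurable_pi_lambda _ fun s =>
        measurable_pi_apply (some (Sum.inr (p, s))))))

theorem measurable_primitives (hx0 : ∀ i, Measurable (x0 i)) (hw : ∀ i t, Measurable (w i t))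
    (hv : ∀ i t, Measurable (v i t)) : Measurable (primitives n N T x0 w v) :=
  measurable_pi_lambda _ (measurable_idxFun hx0 hw hv)

end Primitives

section Exchangeability

variable {N T : ℕ}

def permIdx (σ : Equiv.Perm (Fin N)) : IdxType N T → IdxType N T
  | none => none
  | some (Sum.inl (i, t)) => some (Sum.inl (σ i, t))
  | some (Sum.inr (i, t)) => some (Sum.inr (σ i, t))

theorem permIdx_injective (σ : Equiv.Perm (Fin N)) : (permIdx σ : IdxType N T → _).Injective := by
  rintro (_ | ⟨⟨i, t⟩ | ⟨i, t⟩⟩) (_ | ⟨⟨j, s⟩ | ⟨j, s⟩⟩) hij <;> simp_all [permIdx]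

def relabel (n : ℕ) (σ : Equiv.Perm (Fin N)) :
    (idx : IdxType N T) → idxSpace n N T W V (permIdx σ idx) → idxSpace n N T W V idx
  | none => fun x i => x (σ i)
  | some (Sum.inl _) => id
  | some (Sum.inr _) => id

variable {Ω : Type*} {n : ℕ}
  {x0 : Fin N → Ω → (Fin n → ℝ)} {w : Fin N → ℕ → Ω → W} {v : Fin N → ℕ → Ω → V}

theorem idxFun_perm (σ : Equiv.Perm (Fin N)) (idx : IdxType N T) :
    idxFun n N T (fun i => x0 (σ i)) (fun i => w (σ i)) (fun i => v (σ i)) idx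
      = relabel n σ idx ∘ idxFun n N T x0 w v (permIdx σ idx) :=
  match idx with
  | none => rfl
  | some (Sum.inl _) => rfl
  | some (Sum.inr _) => rfl

variable [MeasurableSpace W] [MeasurableSpace V]

theorem measurable_relabel (σ : Equiv.Perm (Fin N)) (idx : IdxType N T) :
    Measurable (relabel (W := W) (V := V) n σ idx) :=
  match idx with
  | none => measurable_pi_lambda _ fun i => measurable_pi_apply (σ i)
  | some (Sum.inl _) => measurable_id
  | some (Sum.inr _) => measurable_id

variable [MeasurableSpace Ω] {P : Measure Ω}

theorem iIndepFun_idxFun_perm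
    (hindep : ProbabilityTheory.iIndepFun (idxFun n N T x0 w v) P) (σ : Equiv.Perm (Fin N)) :
    ProbabilityTheory.iIndepFun
      (idxFun n N T (fun i => x0 (σ i)) (fun i => w (σ i)) (fun i => v (σ i))) P := by
  have := (hindep.precomp (permIdx_injective σ)).comp (relabel n σ) (measurable_relabel σ)
  simpa only [← idxFun_perm] using this

theorem map_primitives_perm (hx0 : ∀ i, Measurable (x0 i)) (hw : ∀ i t, Measurable (w i t))
    (hv : ∀ i t, Measurable (v i t))
    (hx0exch : ∀ σ : Equiv.Perm (Fin N),
      P.map (fun ω i => x0 (σ i) ω) = P.map (fun ω i => x0 i ω))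
    (hwid : ∀ i j : Fin N, ∀ t : ℕ, P.map (w i t) = P.map (w j t))
    (hvid : ∀ i j : Fin N, ∀ t : ℕ, P.map (v i t) = P.map (v j t))
    (hindep : ProbabilityTheory.iIndepFun (idxFun n N T x0 w v) P) (σ : Equiv.Perm (Fin N)) :
    P.map (primitives n N T (fun i => x0 (σ i)) (fun i => w (σ i)) (fun i => v (σ i)))
      = P.map (primitives n N T x0 w v) := by
  have hmeas := measurable_idxFun (T := T) hx0 hw hv
  have hmeasσ := measurable_idxFun (T := T) (fun i => hx0 (σ i)) (fun i => hw (σ i))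
    (fun i => hv (σ i))
  unfold primitives
  rw [(iIndepFun_idxFun_perm hindep σ).map_fun_eq_pi_map fun idx => (hmeasσ idx).aemeasurable,
    hindep.map_fun_eq_pi_map fun idx => (hmeas idx).aemeasurable]
  congr 1
  funext idx
  match idx with
  | none => exact hx0exch σ
  | some (Sum.inl (i, t)) => exact hwid (σ i) i t
  | some (Sum.inr (i, t)) => exact hvid (σ i) i t

end Exchangeability

section CostInvariance

variable {Ω : Type*} [MeasurableSpace Ω] {P : Measure Ω} {n m N T : ℕ}
  {c : (Fin n → ℝ) → (Fin m → ℝ) → (Fin m → ℝ) → (Fin n → ℝ) → ℝ}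
  {f : ℕ → (Fin n → ℝ) → (Fin m → ℝ) → W → (Fin n → ℝ)}
  {h : (t : ℕ) → (Fin (t + 1) → (Fin n → ℝ)) → (Fin t → (Fin m → ℝ)) → (Fin (t + 1) → V) → Y}
  {γ : Fin N → ℕ → Y → (Fin m → ℝ)}
  {x0 : Fin N → Ω → (Fin n → ℝ)} {w : Fin N → ℕ → Ω → W} {v : Fin N → ℕ → Ω → V}

theorem mfCost_comp_perm (σ : Equiv.Perm (Fin N)) :
    mfCost P N T c f h (fun i => γ (σ i)) x0 w v
      = mfCost P N T c f h γ (fun i => x0 (σ.symm i)) (fun i => w (σ.symm i))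
          (fun i => v (σ.symm i)) := by
  simp only [mfCost_eq_sum_stageCost, stageCost_comp_perm σ]
  congr 1
  refine Finset.sum_congr rfl fun t _ => Equiv.sum_comp σ (fun i => ∫⁻ ω, stageCost N c f h γ t i
    (fun p => (x0 (σ.symm p) ω, fun s => w (σ.symm p) s ω, fun s => v (σ.symm p) s ω)) ∂P)

variable [MeasurableSpace Y] [MeasurableSpace W] [MeasurableSpace V] [Inhabited W] [Inhabited V]

theorem mfCost_eq_lintegral_map
    (hcm : Measurable fun q : (Fin n → ℝ) × (Fin m → ℝ) × (Fin m → ℝ) × (Fin n → ℝ) =>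
      c q.1 q.2.1 q.2.2.1 q.2.2.2)
    (hfm : ∀ t, Measurable fun q : (Fin n → ℝ) × (Fin m → ℝ) × W => f t q.1 q.2.1 q.2.2)
    (hhm : ∀ t, Measurable fun q : (Fin (t + 1) → (Fin n → ℝ)) × (Fin t → (Fin m → ℝ)) ×
      (Fin (t + 1) → V) => h t q.1 q.2.1 q.2.2)
    (hγ : ∀ i t, Measurable (γ i t)) (hx0 : ∀ i, Measurable (x0 i))
    (hw : ∀ i t, Measurable (w i t)) (hv : ∀ i t, Measurable (v i t)) :
    mfCost P N T c f h γ x0 w v = (N : ℝ≥0∞)⁻¹ * ∑ t ∈ Finset.range T, ∑ i,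
      ∫⁻ z, stageCost N c f h γ t i (dmData z) ∂P.map (primitives n N T x0 w v) := by
  rw [mfCost_eq_sum_stageCost]
  congr 1
  refine Finset.sum_congr rfl fun t ht => Finset.sum_congr rfl fun i _ => ?_
  have htT : t < T := Finset.mem_range.1 ht
  have hK : Measurable fun z => stageCost N c f h γ t i (dmData (n := n) (T := T) z) :=
    (measurable_stageCost hcm hfm hhm hγ t i).comp measurable_dmData
  rw [lintegral_map hK (measurable_primitives hx0 hw hv)]
  refine lintegral_congr fun ω => stageCost_congr (fun p => ?_) (fun p s hs => ?_) fun p s hs => ?_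
  · exact (dmData_primitives ω p).1.symm
  · exact ((dmData_primitives ω p).2.1 s (by omega)).symm
  · exact ((dmData_primitives ω p).2.2 s (by omega)).symm

theorem mfCost_perm
    (hcm : Measurable fun q : (Fin n → ℝ) × (Fin m → ℝ) × (Fin m → ℝ) × (Fin n → ℝ) =>
      c q.1 q.2.1 q.2.2.1 q.2.2.2)
    (hfm : ∀ t, Measurable fun q : (Fin n → ℝ) × (Fin m → ℝ) × W => f t q.1 q.2.1 q.2.2)
    (hhm : ∀ t, Measurable fun q : (Fin (t + 1) → (Fin n → ℝ)) × (Fin t → (Fin m → ℝ)) ×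
      (Fin (t + 1) → V) => h t q.1 q.2.1 q.2.2)
    (hγ : ∀ i t, Measurable (γ i t)) (hx0 : ∀ i, Measurable (x0 i))
    (hw : ∀ i t, Measurable (w i t)) (hv : ∀ i t, Measurable (v i t))
    (hx0exch : ∀ σ : Equiv.Perm (Fin N),
      P.map (fun ω i => x0 (σ i) ω) = P.map (fun ω i => x0 i ω))
    (hwid : ∀ i j : Fin N, ∀ t : ℕ, P.map (w i t) = P.map (w j t))
    (hvid : ∀ i j : Fin N, ∀ t : ℕ, P.map (v i t) = P.map (v j t))
    (hindep : ProbabilityTheory.iIndepFun (idxFun n N T x0 w v) P) (σ : Equiv.Perm (Fin N)) :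
    mfCost P N T c f h (fun i => γ (σ i)) x0 w v = mfCost P N T c f h γ x0 w v := by
  rw [mfCost_comp_perm, mfCost_eq_lintegral_map hcm hfm hhm hγ (fun i => hx0 _)
    (fun i => hw _) (fun i => hv _), mfCost_eq_lintegral_map hcm hfm hhm hγ hx0 hw hv,
    map_primitives_perm hx0 hw hv hx0exch hwid hvid hindep]

end CostInvariance

theorem mf_team_symmetrically_optimal_general
    {Ω : Type*} [MeasurableSpace Ω] (P : Measure Ω)
    [MeasurableSpace Y]
    {n m dw dv : ℕ} (N T : ℕ) (hN : 1 ≤ N)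
    (Uset : Set (Fin m → ℝ)) (hUconv : Convex ℝ Uset)
    (c : (Fin n → ℝ) → (Fin m → ℝ) → (Fin m → ℝ) → (Fin n → ℝ) → ℝ)
    (hccont : Continuous
      (fun q : (Fin n → ℝ) × (Fin m → ℝ) × (Fin m → ℝ) × (Fin n → ℝ) =>
        c q.1 q.2.1 q.2.2.1 q.2.2.2))
    (f : ℕ → (Fin n → ℝ) → (Fin m → ℝ) → (Fin dw → ℝ) → (Fin n → ℝ))
    (hfm : ∀ t, Measurable
      (fun q : (Fin n → ℝ) × (Fin m → ℝ) × (Fin dw → ℝ) => f t q.1 q.2.1 q.2.2))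
    (h : (t : ℕ) → (Fin (t + 1) → (Fin n → ℝ)) → (Fin t → (Fin m → ℝ)) →
      (Fin (t + 1) → (Fin dv → ℝ)) → Y)
    (hhm : ∀ t, Measurable
      (fun q : (Fin (t + 1) → (Fin n → ℝ)) × (Fin t → (Fin m → ℝ)) ×
        (Fin (t + 1) → (Fin dv → ℝ)) => h t q.1 q.2.1 q.2.2))
    (x0 : Fin N → Ω → (Fin n → ℝ)) (hx0 : ∀ i, Measurable (x0 i))
    (w : Fin N → ℕ → Ω → (Fin dw → ℝ)) (hw : ∀ i t, Measurable (w i t))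
    (v : Fin N → ℕ → Ω → (Fin dv → ℝ)) (hv : ∀ i t, Measurable (v i t))
    -- the initial states are exchangeable, zero mean, identically distributed
    (hx0exch : ∀ σ : Equiv.Perm (Fin N),
      Measure.map (fun ω => fun i => x0 (σ i) ω) P
        = Measure.map (fun ω => fun i => x0 i ω) P)
    -- the noises are zero mean and identically distributed across decision makers
    (hwid : ∀ i j : Fin N, ∀ t : ℕ, Measure.map (w i t) P = Measure.map (w j t) P)
    (hvid : ∀ i j : Fin N, ∀ t : ℕ, Measure.map (v i t) P = Measure.map (v j t) P)
    -- the noises are mutually independent across decision makers and time,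
    -- independent of each other and of the initial states
    (hindep : ProbabilityTheory.iIndepFun
      (m := fun idx : IdxType N T => idxSpaceMeasurable n N T (Fin dw → ℝ) (Fin dv → ℝ) idx)
      (idxFun n N T x0 w v) P)
    -- the team problem is convex in policies
    (hJconv : ∀ γ₁ γ₂ : Fin N → ℕ → Y → (Fin m → ℝ),
      (∀ i t, Measurable (γ₁ i t)) → (∀ i t y, γ₁ i t y ∈ Uset) →
      (∀ i t, Measurable (γ₂ i t)) → (∀ i t y, γ₂ i t y ∈ Uset) →
      mfCost P N T c f h γ₁ x0 w v ≠ ⊤ → mfCost P N T c f h γ₂ x0 w v ≠ ⊤ →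
      ∀ α : ℝ, α ∈ Set.Ioo (0 : ℝ) 1 →
        mfCost P N T c f h (fun i t y => α • γ₁ i t y + (1 - α) • γ₂ i t y) x0 w v
          ≤ ENNReal.ofReal α * mfCost P N T c f h γ₁ x0 w v
            + ENNReal.ofReal (1 - α) * mfCost P N T c f h γ₂ x0 w v) :
    -- the team is symmetrically optimal
    ∀ γ : Fin N → ℕ → Y → (Fin m → ℝ),
      (∀ i t, Measurable (γ i t)) → (∀ i t y, γ i t y ∈ Uset) →
      mfCost P N T c f h γ x0 w v ≠ ⊤ →
      ∃ γs : ℕ → Y → (Fin m → ℝ),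
        (∀ t, Measurable (γs t)) ∧ (∀ t y, γs t y ∈ Uset) ∧
        mfCost P N T c f h (fun _ => γs) x0 w v ≤ mfCost P N T c f h γ x0 w v := by
  intro γ hγm hγU hγfin
  have : NeZero N := ⟨by omega⟩
  set S := {γ' : Fin N → ℕ → Y → (Fin m → ℝ) |
    (∀ i t, Measurable (γ' i t)) ∧ ∀ i t y, γ' i t y ∈ Uset}
  have hS : Convex ℝ S := convex_setOf_measurable_mem hUconv
  have hJ : ConvexWhereFinite S (mfCost P N T c f h · x0 w v) :=
    fun γ₁ h₁ γ₂ h₂ => hJconv γ₁ γ₂ h₁.1 h₁.2 h₂.1 h₂.2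
  have hshift (k : Fin N) :
      mfCost P N T c f h (fun i => γ (i + k)) x0 w v = mfCost P N T c f h γ x0 w v :=
    mfCost_perm hccont.measurable hfm hhm hγm hx0 hw hv hx0exch hwid hvid hindep
      (Equiv.addRight k)
  have hmem : ∀ k ∈ Finset.univ, (fun i => γ (i + k)) ∈ S :=
    fun k _ => ⟨fun i => hγm (i + k), fun i => hγU (i + k)⟩
  have hwt₀ : ∀ k ∈ (Finset.univ : Finset (Fin N)), 0 ≤ (N : ℝ)⁻¹ := fun _ _ => by positivity
  have hwt₁ : ∑ _k : Fin N, (N : ℝ)⁻¹ = 1 := by simp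
  have havg : ∑ k : Fin N, (N : ℝ)⁻¹ • (fun i => γ (i + k))
      = fun _ t y => (N : ℝ)⁻¹ • ∑ j, γ j t y := by
    rw [← Finset.smul_sum, sum_translates_eq_const]
    funext _ t y
    simp only [Pi.smul_apply, Finset.sum_apply]
  obtain ⟨hγsm, hγsU⟩ : (fun _ t y => (N : ℝ)⁻¹ • ∑ j, γ j t y) ∈ S :=
    havg ▸ hS.sum_mem hwt₀ hwt₁ hmem
  refine ⟨fun t y => (N : ℝ)⁻¹ • ∑ j, γ j t y, hγsm 0, hγsU 0, ?_⟩
  rw [← havg]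
  exact hJ.apply_sum_le hS hwt₀ hwt₁ hmem hγfin fun k _ => (hshift k).le

/-- Lemma 3 of the paper: the convex mean-field `N`-decision-maker team with compact
convex action set, continuous nonnegative cost, continuous dynamics and observations,
exchangeable zero-mean initial states and i.i.d. zero-mean noises, is symmetrically
optimal: for every admissible policy profile with finite cost there is an identically
symmetric profile performing at least as well. -/
theorem mf_team_symmetrically_optimal
    {Ω : Type*} [MeasurableSpace Ω] (P : Measure Ω) [IsProbabilityMeasure P]
    [TopologicalSpace Y] [PolishSpace Y] [MeasurableSpace Y] [BorelSpace Y]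
    {n m dw dv : ℕ} (N T : ℕ) (hN : 1 ≤ N) (hT : 1 ≤ T)
    (Uset : Set (Fin m → ℝ)) (hUcpt : IsCompact Uset) (hUconv : Convex ℝ Uset)
    (hUne : Uset.Nonempty)
    (c : (Fin n → ℝ) → (Fin m → ℝ) → (Fin m → ℝ) → (Fin n → ℝ) → ℝ)
    (hccont : Continuous
      (fun q : (Fin n → ℝ) × (Fin m → ℝ) × (Fin m → ℝ) × (Fin n → ℝ) =>
        c q.1 q.2.1 q.2.2.1 q.2.2.2))
    (hc0 : ∀ x u ubar xbar, 0 ≤ c x u ubar xbar)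
    (f : ℕ → (Fin n → ℝ) → (Fin m → ℝ) → (Fin dw → ℝ) → (Fin n → ℝ))
    -- `f t` is continuous in the state and action
    (hf : ∀ t wv, Continuous (fun q : (Fin n → ℝ) × (Fin m → ℝ) => f t q.1 q.2 wv))
    (hfm : ∀ t, Measurable
      (fun q : (Fin n → ℝ) × (Fin m → ℝ) × (Fin dw → ℝ) => f t q.1 q.2.1 q.2.2))
    (h : (t : ℕ) → (Fin (t + 1) → (Fin n → ℝ)) → (Fin t → (Fin m → ℝ)) →
      (Fin (t + 1) → (Fin dv → ℝ)) → Y)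
    -- `h t` is continuous in the state and action histories
    (hhc : ∀ t vv, Continuous
      (fun q : (Fin (t + 1) → (Fin n → ℝ)) × (Fin t → (Fin m → ℝ)) => h t q.1 q.2 vv))
    (hhm : ∀ t, Measurable
      (fun q : (Fin (t + 1) → (Fin n → ℝ)) × (Fin t → (Fin m → ℝ)) ×
        (Fin (t + 1) → (Fin dv → ℝ)) => h t q.1 q.2.1 q.2.2))
    (x0 : Fin N → Ω → (Fin n → ℝ)) (hx0 : ∀ i, Measurable (x0 i))
    (w : Fin N → ℕ → Ω → (Fin dw → ℝ)) (hw : ∀ i t, Measurable (w i t))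
    (v : Fin N → ℕ → Ω → (Fin dv → ℝ)) (hv : ∀ i t, Measurable (v i t))
    -- the initial states are exchangeable, zero mean, identically distributed
    (hx0exch : ∀ σ : Equiv.Perm (Fin N),
      Measure.map (fun ω => fun i => x0 (σ i) ω) P
        = Measure.map (fun ω => fun i => x0 i ω) P)
    (hx0mean : ∀ i, ∫ ω, x0 i ω ∂P = 0)
    (hx0id : ∀ i j, Measure.map (x0 i) P = Measure.map (x0 j) P)
    -- the noises are zero mean and identically distributed across decision makers
    (hwmean : ∀ i t, ∫ ω, w i t ω ∂P = 0)
    (hvmean : ∀ i t, ∫ ω, v i t ω ∂P = 0)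
    (hwid : ∀ i j : Fin N, ∀ t : ℕ, Measure.map (w i t) P = Measure.map (w j t) P)
    (hvid : ∀ i j : Fin N, ∀ t : ℕ, Measure.map (v i t) P = Measure.map (v j t) P)
    -- the noises are mutually independent across decision makers and time,
    -- independent of each other and of the initial states
    (hindep : ProbabilityTheory.iIndepFun
      (m := fun idx : IdxType N T => idxSpaceMeasurable n N T (Fin dw → ℝ) (Fin dv → ℝ) idx)
      (idxFun n N T x0 w v) P)
    -- the team problem is convex in policies
    (hJconv : ∀ γ₁ γ₂ : Fin N → ℕ → Y → (Fin m → ℝ),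
      (∀ i t, Measurable (γ₁ i t)) → (∀ i t y, γ₁ i t y ∈ Uset) →
      (∀ i t, Measurable (γ₂ i t)) → (∀ i t y, γ₂ i t y ∈ Uset) →
      mfCost P N T c f h γ₁ x0 w v ≠ ⊤ → mfCost P N T c f h γ₂ x0 w v ≠ ⊤ →
      ∀ α : ℝ, α ∈ Set.Ioo (0 : ℝ) 1 →
        mfCost P N T c f h (fun i t y => α • γ₁ i t y + (1 - α) • γ₂ i t y) x0 w v
          ≤ ENNReal.ofReal α * mfCost P N T c f h γ₁ x0 w v
            + ENNReal.ofReal (1 - α) * mfCost P N T c f h γ₂ x0 w v) :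
    -- the team is symmetrically optimal
    ∀ γ : Fin N → ℕ → Y → (Fin m → ℝ),
      (∀ i t, Measurable (γ i t)) → (∀ i t y, γ i t y ∈ Uset) →
      mfCost P N T c f h γ x0 w v ≠ ⊤ →
      ∃ γs : ℕ → Y → (Fin m → ℝ),
        (∀ t, Measurable (γs t)) ∧ (∀ t y, γs t y ∈ Uset) ∧
        mfCost P N T c f h (fun _ => γs) x0 w v ≤ mfCost P N T c f h γ x0 w v :=
  mf_team_symmetrically_optimal_general P N T hN Uset hUconv c hccont f hfm h hhm x0 hx0 w hw v hv
    hx0exch hwid hvid hindep hJconv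

end MeanFieldTeam5
end
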